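/- The differential of self-attention f at X = (x₁,…,x_n) applied to ε = (ε₁,…,ε_n) is given componentwise by (D_X f)(ε)_i = V Σ_j P_{ij}(x_j - Σ_k P_{ik} x_k) x_iᵀ Aᵀ ε_j + V Σ_j P_{ij} ε_j + V Σ_j P_{ij}(x_j - Σ_k P_{ik} x_k) x_jᵀ A ε_i, where P_{ij} = exp(x_iᵀAᵀx_j)/Σ_k exp(x_iᵀAᵀx_k). -/

import Mathlib

open Matrix

/-- Self-attention as a map between sequence spaces equipped with the Frobenius norm. -/
noncomputable def attnF (n d k : ℕ) (A : Matrix (Fin d) (Fin d) ℝ)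
    (V : Matrix (Fin k) (Fin d) ℝ) :
    PiLp 2 (fun _ : Fin n => EuclideanSpace ℝ (Fin d)) →
      PiLp 2 (fun _ : Fin n => EuclideanSpace ℝ (Fin k)) :=
  fun x => WithLp.toLp 2 (fun i => WithLp.toLp 2 (V.mulVec (∑ j, (Real.exp ((x i) ⬝ᵥ (Aᵀ.mulVec (x j))) /
      ∑ l, Real.exp ((x i) ⬝ᵥ (Aᵀ.mulVec (x l)))) • x j)))

/-!
Row `i` of self-attention is `V` applied to the softmax average of the tokens `x j`, with scores
`s_ij = x_iᵀ Aᵀ x_j` given by a continuous bilinear form. Writing softmax as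
`p_j = exp (s_j - log ∑ₗ exp s_l)` and using that the gradient of log-sum-exp is the softmax
average of the gradients gives `dp_j = p_j (ds_j - ∑ₗ p_l ds_l)`; the product rule then gives
the derivative of the average, and the two halves `x_iᵀ Aᵀ ε_j` and `ε_iᵀ Aᵀ x_j = x_jᵀ A ε_i`
of the derivative of the score produce the first and the third term of the formula.
-/

open Finset

/-- Both sides are the covariance `∑ p a v - (∑ p a) (∑ p v)`; no normalisation of `p` is
needed. -/
theorem sum_mul_sub_sum_mul_smul {ι R M : Type*} [Fintype ι] [CommRing R] [AddCommGroup M]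
    [Module R M] (p a : ι → R) (v : ι → M) :
    ∑ j, (p j * (a j - ∑ l, p l * a l)) • v j = ∑ j, (p j * a j) • (v j - ∑ l, p l • v l) := by
  simp only [mul_sub, sub_smul, smul_sub, sum_sub_distrib, mul_sum, sum_smul, smul_sum, smul_smul]
  rw [sum_comm (f := fun j l => (p j * (p l * a l)) • v j)]
  congr 2 with j
  exact sum_congr rfl fun l _ => by ring_nf

section Softmax

variable {ι E F : Type*} [Fintype ι] [NormedAddCommGroup E] [NormedSpace ℝ E]
  [NormedAddCommGroup F] [NormedSpace ℝ F]

noncomputable def softmax (s : ι → ℝ) (j : ι) : ℝ := Real.exp (s j) / ∑ l, Real.exp (s l)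

variable [Nonempty ι]

theorem sum_exp_pos (s : ι → ℝ) : 0 < ∑ l, Real.exp (s l) :=
  sum_pos (fun _ _ => Real.exp_pos _) univ_nonempty

theorem softmax_eq_exp_sub_log (s : ι → ℝ) (j : ι) :
    softmax s j = Real.exp (s j - Real.log (∑ l, Real.exp (s l))) := by
  rw [Real.exp_sub, Real.exp_log (sum_exp_pos s), softmax]

variable {s : ι → E → ℝ} {s' : ι → E →L[ℝ] ℝ} {x : E}

theorem hasFDerivAt_log_sum_exp (hs : ∀ j, HasFDerivAt (s j) (s' j) x) :
    HasFDerivAt (fun y => Real.log (∑ l, Real.exp (s l y)))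
      (∑ l, softmax (s · x) l • s' l) x := by
  convert (HasFDerivAt.fun_sum fun l _ => (hs l).exp).log (sum_exp_pos (s · x)).ne' using 1
  simp only [softmax, div_eq_inv_mul, mul_smul, smul_sum]

theorem hasFDerivAt_softmax (hs : ∀ j, HasFDerivAt (s j) (s' j) x) (j : ι) :
    HasFDerivAt (fun y => softmax (s · y) j)
      (softmax (s · x) j • (s' j - ∑ l, softmax (s · x) l • s' l)) x := by
  simp only [softmax_eq_exp_sub_log (s · _) j]
  exact ((hs j).sub (hasFDerivAt_log_sum_exp hs)).exp

theorem hasFDerivAt_sum_softmax_smul {v : ι → E → F} {v' : ι → E →L[ℝ] F}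
    (hs : ∀ j, HasFDerivAt (s j) (s' j) x) (hv : ∀ j, HasFDerivAt (v j) (v' j) x) :
    HasFDerivAt (fun y => ∑ j, softmax (s · y) j • v j y)
      (∑ j, (softmax (s · x) j • s' j).smulRight (v j x - ∑ l, softmax (s · x) l • v l x) +
        ∑ j, softmax (s · x) j • v' j) x := by
  convert HasFDerivAt.fun_sum fun j _ => (hasFDerivAt_softmax hs j).fun_smul (hv j) using 1
  ext ε
  simp only [_root_.add_apply, FunLike.coe_sum, Finset.sum_apply,
    ContinuousLinearMap.smulRight_apply, _root_.smul_apply, _root_.sub_apply, smul_eq_mul]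
  rw [sum_add_distrib, sum_mul_sub_sum_mul_smul, add_comm]

end Softmax

section Attention

variable {ι F G : Type*} [Fintype ι] [NormedAddCommGroup F] [NormedSpace ℝ F]
  [NormedAddCommGroup G] [NormedSpace ℝ G]

theorem hasFDerivAt_attention_row (B : F →L[ℝ] F →L[ℝ] ℝ) (V : F →L[ℝ] G)
    (x : PiLp 2 (fun _ : ι => F)) (i : ι) :
    ∃ L : PiLp 2 (fun _ : ι => F) →L[ℝ] G,
      HasFDerivAt (fun y : PiLp 2 (fun _ : ι => F) =>
        V (∑ j, softmax (fun l => B (y i) (y l)) j • y j)) L x ∧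
      ∀ ε, L ε = V (∑ j, (softmax (fun l => B (x i) (x l)) j * (B (x i) (ε j) + B (ε i) (x j))) •
          (x j - ∑ l, softmax (fun l => B (x i) (x l)) l • x l) +
        ∑ j, softmax (fun l => B (x i) (x l)) j • ε j) := by
  have : Nonempty ι := ⟨i⟩
  have hproj (j : ι) := PiLp.hasFDerivAt_apply (𝕜 := ℝ) 2 x j
  have hscore (j : ι) := B.hasFDerivAt_of_bilinear (hproj i) (hproj j)
  refine ⟨V ∘L _, V.hasFDerivAt.comp x (hasFDerivAt_sum_softmax_smul hscore hproj), fun ε => ?_⟩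
  simp [mul_add]

end Attention

namespace Matrix

variable {κ : Type*} [Fintype κ] [DecidableEq κ] (A : Matrix κ κ ℝ)

noncomputable def toEuclideanBilinCLM : EuclideanSpace ℝ κ →L[ℝ] EuclideanSpace ℝ κ →L[ℝ] ℝ :=
  (innerSL ℝ).bilinearComp (.id ℝ _) (toEuclideanCLM (n := κ) (𝕜 := ℝ) A)

theorem toEuclideanBilinCLM_apply (u v : EuclideanSpace ℝ κ) :
    A.toEuclideanBilinCLM u v = u ⬝ᵥ A *ᵥ v :=
  inner_toEuclideanCLM A u v

theorem toEuclideanBilinCLM_transpose_apply (u v : EuclideanSpace ℝ κ) :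
    Aᵀ.toEuclideanBilinCLM u v = v ⬝ᵥ A *ᵥ u := by
  rw [toEuclideanBilinCLM_apply, mulVec_transpose, dotProduct_mulVec, dotProduct_comm]

end Matrix

theorem attnF_eq_softmax (n d k : ℕ) (A : Matrix (Fin d) (Fin d) ℝ)
    (V : Matrix (Fin k) (Fin d) ℝ) :
    attnF n d k A V = fun y => WithLp.toLp 2 fun i => (toLpLin 2 2 V).toContinuousLinearMap
      (∑ j, softmax (fun l => Aᵀ.toEuclideanBilinCLM (y i) (y l)) j • y j) := by
  funext y
  simp only [attnF, softmax, toEuclideanBilinCLM_apply, LinearMap.coe_toContinuousLinearMap',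
    toLpLin_apply, WithLp.ofLp_sum, WithLp.ofLp_smul]

/-- the differential of self-attention at `X` is given by the explicit
formula of Lemma "Jacobian of self-attention". -/
theorem attn_hasFDerivAt {n d k : ℕ}
    (A : Matrix (Fin d) (Fin d) ℝ) (V : Matrix (Fin k) (Fin d) ℝ)
    (x : PiLp 2 (fun _ : Fin n => EuclideanSpace ℝ (Fin d)))
    (P : Fin n → Fin n → ℝ)
    (hP : ∀ i j, P i j = Real.exp ((x i) ⬝ᵥ (Aᵀ.mulVec (x j))) /
      ∑ l, Real.exp ((x i) ⬝ᵥ (Aᵀ.mulVec (x l)))) :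
    ∃ L : PiLp 2 (fun _ : Fin n => EuclideanSpace ℝ (Fin d)) →L[ℝ]
        PiLp 2 (fun _ : Fin n => EuclideanSpace ℝ (Fin k)),
      HasFDerivAt (attnF n d k A V) L x ∧
      ∀ (ε : PiLp 2 (fun _ : Fin n => EuclideanSpace ℝ (Fin d))) (i : Fin n),
        L ε i =
          V.mulVec (∑ j, (P i j * ((x i) ⬝ᵥ (Aᵀ.mulVec (ε j)))) •
              (x j - ∑ l, P i l • x l)) +
          V.mulVec (∑ j, P i j • ε j) +
          V.mulVec (∑ j, (P i j * ((x j) ⬝ᵥ (A.mulVec (ε i)))) •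
              (x j - ∑ l, P i l • x l)) := by
  choose L hL hLε using hasFDerivAt_attention_row Aᵀ.toEuclideanBilinCLM
    (toLpLin 2 2 V).toContinuousLinearMap x
  refine ⟨(PiLp.continuousLinearEquiv 2 ℝ _).symm.toContinuousLinearMap ∘L .pi L, ?_, fun ε i => ?_⟩
  · rw [attnF_eq_softmax]
    exact (PiLp.continuousLinearEquiv 2 ℝ _).symm.hasFDerivAt.comp x (hasFDerivAt_pi.2 hL)
  · change (L i ε).ofLp = _
    rw [hLε]
    -- only the scores with `ε i` in the first slot take the form `x_jᵀ A ε_i` of the third term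
    simp only [toEuclideanBilinCLM_transpose_apply A (ε i)]
    simp only [toEuclideanBilinCLM_apply, softmax, ← hP, LinearMap.coe_toContinuousLinearMap',
      toLpLin_apply, WithLp.ofLp_add, WithLp.ofLp_sum, WithLp.ofLp_smul, WithLp.ofLp_sub, mul_add,
      add_smul, sum_add_distrib, mulVec_add]
    abel
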